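/- Every 2-regular finite graph G satisfies L_2(G) ≥ |V(G)|/2. -/

import Mathlib

/-- The closed neighbourhood `N[v] = {v} ∪ N(v)` of a vertex `v`. -/
def SimpleGraph.closedNbhd {V : Type*} (G : SimpleGraph V) (v : V) : Set V :=
  insert v (G.neighborSet v)

/-- A set `X ⊆ V(G)` is a `k`-limited packing if `|N[v] ∩ X| ≤ k` for every vertex `v`. -/
def SimpleGraph.IsLimitedPacking {V : Type*} (G : SimpleGraph V) (k : ℕ) (X : Set V) : Prop :=
  ∀ v : V, (X ∩ G.closedNbhd v).ncard ≤ k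

/-- `L_k(G)`: the maximum cardinality of a `k`-limited packing in `G`. -/
noncomputable def SimpleGraph.limitedPackingNumber {V : Type*} (G : SimpleGraph V) (k : ℕ) : ℕ :=
  sSup {n | ∃ X : Set V, G.IsLimitedPacking k X ∧ X.ncard = n}

/-!
A maximal independent set `I` dominates the graph, and since no vertex of a 2-regular graph
is isolated, so does its complement. The smaller of `I` and `Iᶜ` is a dominating set `D`
with `|D| ≤ n/2`. Every closed neighbourhood has exactly three vertices and meets `D`, so
it meets `Dᶜ` in at most two: `Dᶜ` is a 2-limited packing of size at least `n/2`.
-/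

namespace SimpleGraph

variable {V : Type*} (G : SimpleGraph V)

def IsDominating (D : Set V) : Prop :=
  ∀ v : V, (D ∩ G.closedNbhd v).Nonempty

variable {G}

lemma self_mem_closedNbhd (v : V) : v ∈ G.closedNbhd v :=
  Set.mem_insert v _

lemma mem_closedNbhd_of_adj {v w : V} (h : G.Adj v w) : w ∈ G.closedNbhd v :=
  Set.mem_insert_of_mem v h

lemma ncard_closedNbhd (v : V) [Fintype (G.neighborSet v)] :
    (G.closedNbhd v).ncard = G.degree v + 1 := by
  rw [closedNbhd, Set.ncard_insert_of_notMem G.notMem_neighborSet_self,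
    Set.ncard_eq_toFinset_card', Set.toFinset_card, card_neighborSet_eq_degree]

lemma isDominating_of_maximal_isIndepSet {I : Set V} (hI : Maximal G.IsIndepSet I) :
    G.IsDominating I := by
  intro v
  by_cases hv : v ∈ I
  · exact ⟨v, hv, self_mem_closedNbhd v⟩
  by_contra hnone
  have hnotAdj : ∀ w ∈ I, ¬G.Adj v w := fun w hw hvw => hnone ⟨w, hw, mem_closedNbhd_of_adj hvw⟩
  have hindep : G.IsIndepSet (insert v I) :=
    hI.prop.insert fun w hw _ => ⟨hnotAdj w hw, fun hwv => hnotAdj w hw hwv.symm⟩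
  exact hv (hI.mem_of_prop_insert hindep)

lemma IsIndepSet.isDominating_compl {I : Set V} (hI : G.IsIndepSet I)
    (hnoIso : ∀ v, ∃ w, G.Adj v w) : G.IsDominating Iᶜ := by
  intro v
  by_cases hv : v ∈ I
  · obtain ⟨w, hvw⟩ := hnoIso v
    exact ⟨w, fun hw => hI hv hw hvw.ne hvw, mem_closedNbhd_of_adj hvw⟩
  · exact ⟨v, hv, self_mem_closedNbhd v⟩

lemma exists_isDominating_two_mul_ncard_le [Finite V] (hnoIso : ∀ v, ∃ w, G.Adj v w) :
    ∃ D : Set V, G.IsDominating D ∧ 2 * D.ncard ≤ Nat.card V := by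
  obtain ⟨I, hI⟩ := exists_maximal_of_wellFoundedGT G.IsIndepSet ⟨∅, Set.pairwise_empty _⟩
  have hsum := Set.ncard_add_ncard_compl I
  by_cases hsmall : 2 * I.ncard ≤ Nat.card V
  · exact ⟨I, isDominating_of_maximal_isIndepSet hI, hsmall⟩
  · exact ⟨Iᶜ, hI.prop.isDominating_compl hnoIso, by omega⟩

lemma IsDominating.isLimitedPacking_compl [Finite V] {k : ℕ} {D : Set V}
    (hD : G.IsDominating D) (hN : ∀ v, (G.closedNbhd v).ncard ≤ k + 1) :
    G.IsLimitedPacking k Dᶜ := by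
  intro v
  have hsplit := Set.ncard_inter_add_ncard_sdiff_eq_ncard (G.closedNbhd v) D
  have hmeet : 0 < (G.closedNbhd v ∩ D).ncard :=
    (Set.inter_comm D _ ▸ hD v).ncard_pos
  rw [Set.inter_comm, ← Set.sdiff_eq]
  have := hN v
  omega

lemma IsLimitedPacking.ncard_le_limitedPackingNumber [Finite V] {k : ℕ} {X : Set V}
    (hX : G.IsLimitedPacking k X) : X.ncard ≤ G.limitedPackingNumber k :=
  le_csSup ⟨Nat.card V, by rintro _ ⟨Y, -, rfl⟩; exact Set.ncard_le_card Y⟩ ⟨X, hX, rfl⟩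

end SimpleGraph

/-- Every 2-regular finite graph `G` satisfies `L_2(G) ≥ |V(G)|/2`. -/
theorem stmt7 {V : Type*} [Fintype V] (G : SimpleGraph V) [DecidableRel G.Adj]
    (hreg : G.IsRegularOfDegree 2) :
    Fintype.card V ≤ 2 * G.limitedPackingNumber 2 := by
  have hnoIso : ∀ v, ∃ w, G.Adj v w := fun v =>
    (G.degree_pos_iff_exists_adj v).mp (by rw [hreg v]; norm_num)
  obtain ⟨D, hD, hsmall⟩ := G.exists_isDominating_two_mul_ncard_le hnoIso
  have hpack : G.IsLimitedPacking 2 Dᶜ :=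
    hD.isLimitedPacking_compl fun v => by rw [G.ncard_closedNbhd, hreg v]
  have hle := hpack.ncard_le_limitedPackingNumber
  have hsum := Set.ncard_add_ncard_compl D
  rw [Nat.card_eq_fintype_card] at hsmall hsum
  omega
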